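/- arXiv:1810.04233 — 2 statements merged into one kernel-verified Lean document; each statement's English description precedes it below -/
import Mathlib

section
/- Let n ≥ 1 and consider 2n qudit registers L₁,...,Lₙ, R₁,...,Rₙ, where each pair (Lᵢ,Rᵢ) is in the maximally entangled state |epr_d⟩. Suppose Bell basis measurements are performed on the pairs (R₁,L₂),(R₂,L₃),...,(R_{n−1},Lₙ), yielding post-measurement states (X^{xᵢ}⊗Z^{yᵢ})|epr_d⟩ on the i-th pair. Let x = Σᵢxᵢ and y = Σᵢyᵢ (sums in ℤ_d). Then the post-measurement state of the remaining pair (L₁,Rₙ) is (X^x ⊗ Z^{−y})|epr_d⟩. -/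
/-!
Up to the factor `1/√d`, the coefficient matrix of `(X^x ⊗ Z^y)|epr_d⟩` is the Weyl operator
`X^x Z^y`, and the overlap of the chain of EPR pairs with the measured Bell states is the matrix
product `(1/√d)^(2m+1) X^{x₁} Z^{-y₁} ⋯ X^{xₘ} Z^{-yₘ}`. Since `Z X = ω X Z`, moving all `Z`s to the
right only produces a root of unity, so this product is a nonzero multiple of `X^{∑x} Z^{-∑y}`,
the coefficient matrix of the claimed state of `(L₁, R_{m+1})`.
-/

open Finset Matrix ZMod

theorem Fin.lastCases_cons_zero {α : Type*} {m : ℕ} (a b : α) (f : Fin m → α) :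
    Fin.lastCases (motive := fun _ => α) b (Fin.cons a f : Fin (m + 1) → α) 0 = a := by
  rw [← Fin.castSucc_zero, Fin.lastCases_castSucc, Fin.cons_zero]

theorem Fin.lastCases_cons_succ {α : Type*} {m : ℕ} (a b : α) (f : Fin m → α)
    (j : Fin (m + 1)) :
    Fin.lastCases (motive := fun _ => α) b (Fin.cons a f) j.succ =
      Fin.lastCases (motive := fun _ => α) b f j := by
  induction j using Fin.lastCases with
  | last => rw [Fin.succ_last, Fin.lastCases_last, Fin.lastCases_last]
  | cast i =>
    rw [Fin.succ_castSucc, Fin.lastCases_castSucc, Fin.lastCases_castSucc, Fin.cons_succ]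

section

variable {d : ℕ} [NeZero d]

lemma exp_two_pi_I_div_pow_val (a : ZMod d) :
    Complex.exp (2 * Real.pi * Complex.I / d) ^ a.val = stdAddChar a := by
  rw [stdAddChar_apply, toCircle_apply, ← Complex.exp_nat_mul]
  congr 1
  ring

/-- The coefficient matrix of `(X^x ⊗ Z^y)|epr_d⟩`, i.e. `(√d)⁻¹ X^x Z^y` with `X|j⟩ = |j + 1⟩`
and `Z|j⟩ = ω^j |j⟩`. -/
noncomputable def bellMatrix (x y : ZMod d) : Matrix (ZMod d) (ZMod d) ℂ :=
  of fun i j => if i = j + x then ((Real.sqrt d : ℂ))⁻¹ * stdAddChar (y * j) else 0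

lemma bellMatrix_zero_zero : bellMatrix (0 : ZMod d) 0 = ((Real.sqrt d : ℂ))⁻¹ • 1 := by
  ext i j
  simp [bellMatrix, one_apply]

lemma bellMatrix_map_conj (x y : ZMod d) :
    (bellMatrix x y).map (starRingEnd ℂ) = bellMatrix x (-y) := by
  ext i j
  simp only [bellMatrix, map_apply, of_apply]
  split_ifs <;> simp [neg_mul, AddChar.map_neg_eq_conj]

lemma bellMatrix_mul_bellMatrix (x y x' y' : ZMod d) :
    bellMatrix x y * bellMatrix x' y' =
      (((Real.sqrt d : ℂ))⁻¹ * stdAddChar (y * x')) • bellMatrix (x + x') (y + y') := by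
  ext i k
  rw [mul_apply, Fintype.sum_eq_single (k + x') fun j hj => by simp [bellMatrix, hj]]
  simp only [bellMatrix, of_apply, Matrix.smul_apply, smul_eq_mul, if_true, add_comm x x',
    ← add_assoc]
  split_ifs
  · rw [mul_add, add_mul, AddChar.map_add_eq_mul, AddChar.map_add_eq_mul]
    ring
  · simp

/-- Entry `(a, b)` is the overlap of the EPR chain with `L₁ = a`, `R_{m+1} = b` and the measured
Bell states on the pairs `(Rᵢ, Lᵢ₊₁)`; `ρ` and `lam` run over the values of `R₁, …, Rₘ` and
`L₂, …, L_{m+1}`. -/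
noncomputable def chainAmplitude {m : ℕ} (x y : Fin m → ZMod d) :
    Matrix (ZMod d) (ZMod d) ℂ :=
  of fun a b => ∑ ρ : Fin m → ZMod d, ∑ lam : Fin m → ZMod d,
    starRingEnd ℂ (∏ i, bellMatrix (x i) (y i) (ρ i) (lam i)) *
      ∏ j : Fin (m + 1), bellMatrix 0 0 (Fin.cases a lam j) (Fin.lastCases b ρ j)

lemma chainAmplitude_of_fin_zero (x y : Fin 0 → ZMod d) :
    chainAmplitude x y = bellMatrix 0 0 := by
  ext a b
  have lastCases_zero (ρ : Fin 0 → ZMod d) : Fin.lastCases (motive := fun _ => ZMod d) b ρ 0 = b :=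
    Fin.lastCases_last ..
  simp [chainAmplitude, lastCases_zero]

lemma chainAmplitude_cons {m : ℕ} (x₀ y₀ : ZMod d) (x y : Fin m → ZMod d) :
    chainAmplitude (Fin.cons x₀ x : Fin (m + 1) → ZMod d) (Fin.cons y₀ y) =
      bellMatrix 0 0 * ((bellMatrix x₀ y₀).map (starRingEnd ℂ) * chainAmplitude x y) := by
  ext a b
  simp only [chainAmplitude, of_apply, mul_apply, map_apply, mul_sum]
  simp only [← (Fin.consEquiv fun _ => ZMod d).sum_comp, Fintype.sum_prod_type,
    Fin.consEquiv, Equiv.coe_fn_mk, Fin.prod_univ_succ, Fin.cons_zero, Fin.cons_succ,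
    Fin.cases_zero, Fin.cases_succ, Fin.lastCases_cons_zero, Fin.lastCases_cons_succ, map_mul]
  refine sum_congr rfl fun ρ₀ _ => sum_comm.trans (sum_congr rfl fun l₀ _ => ?_)
  exact sum_congr rfl fun ρ _ => sum_congr rfl fun l _ => by ring

lemma exists_chainAmplitude_eq_smul {m : ℕ} (x y : Fin m → ZMod d) :
    ∃ c : ℂ, c ≠ 0 ∧ chainAmplitude x y = c • bellMatrix (∑ i, x i) (-∑ i, y i) := by
  induction m with
  | zero => exact ⟨1, one_ne_zero, by simp [chainAmplitude_of_fin_zero]⟩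
  | succ m ih =>
    cases x using Fin.consCases with | cons x₀ x =>
    cases y using Fin.consCases with | cons y₀ y =>
    obtain ⟨c, hc, hchain⟩ := ih x y
    refine ⟨(Real.sqrt d : ℂ)⁻¹ ^ 2 * stdAddChar (-y₀ * ∑ i, x i) * c,
      by simp [hc, NeZero.ne d, (AddChar.val_isUnit _ _).ne_zero], ?_⟩
    rw [chainAmplitude_cons, hchain, bellMatrix_map_conj, bellMatrix_zero_zero, Matrix.mul_smul,
      bellMatrix_mul_bellMatrix, Matrix.smul_mul, Matrix.one_mul, smul_smul, smul_smul,
      Fin.sum_cons, Fin.sum_cons, neg_add]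
    congr 1
    ring

end

theorem entanglement_transfer_chain_general (d m : ℕ) [NeZero d]
    (x y : Fin m → ZMod d) :
    let ω : ℂ := Complex.exp (2 * Real.pi * Complex.I / d)
    let eprXZ : ZMod d → ZMod d → ZMod d → ZMod d → ℂ := fun x' y' i j =>
      if i = j + x' then ((Real.sqrt d : ℂ))⁻¹ * ω ^ (y' * j).val else 0
    -- the initial state: each pair (Lᵢ, Rᵢ) in |epr_d⟩
    let Ψ : (Fin (m + 1) → ZMod d) → (Fin (m + 1) → ZMod d) → ℂ := fun l r =>
      ∏ i : Fin (m + 1), eprXZ 0 0 (l i) (r i)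
    -- the state after projecting each pair (Rᵢ, Lᵢ₊₁) onto (X^{xᵢ}⊗Z^{yᵢ})|epr_d⟩
    let P : (Fin (m + 1) → ZMod d) → (Fin (m + 1) → ZMod d) → ℂ := fun l r =>
      (∏ i : Fin m, eprXZ (x i) (y i) (r i.castSucc) (l i.succ)) *
        ∑ ρ : Fin m → ZMod d, ∑ lam : Fin m → ZMod d,
          (starRingEnd ℂ) (∏ i : Fin m, eprXZ (x i) (y i) (ρ i) (lam i)) *
            Ψ (fun j => Fin.cases (l 0) (fun i => lam i) j)
              (fun j => Fin.lastCases (r (Fin.last m)) (fun i => ρ i) j)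
    ∃ c : ℂ, c ≠ 0 ∧ ∀ l r : Fin (m + 1) → ZMod d,
      P l r = c * eprXZ (∑ i, x i) (-∑ i, y i) (l 0) (r (Fin.last m)) *
        ∏ i : Fin m, eprXZ (x i) (y i) (r i.castSucc) (l i.succ) := by
  intro ω eprXZ Ψ P
  have heprXZ : eprXZ = fun x' y' i j => bellMatrix x' y' i j := by
    simp only [eprXZ, ω, exp_two_pi_I_div_pow_val, bellMatrix, of_apply]
  obtain ⟨c, hc, hchain⟩ := exists_chainAmplitude_eq_smul x y
  refine ⟨c, hc, fun l r => ?_⟩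
  have hP : P l r = (∏ i : Fin m, eprXZ (x i) (y i) (r i.castSucc) (l i.succ)) *
      chainAmplitude x y (l 0) (r (Fin.last m)) := by
    simp only [P, Ψ, heprXZ, chainAmplitude, of_apply]
  rw [hP, hchain, heprXZ, Matrix.smul_apply, smul_eq_mul]
  ring

/-- Entanglement swapping along a chain. There are `m+1` pairs of qudit registers
`(Lᵢ, Rᵢ)`, each initialized in `|epr_d⟩ = (1/√d)∑ᵢ|ii⟩`. Bell-basis measurements on the `m`
pairs `(Rᵢ, Lᵢ₊₁)` (for `i = 1, …, m`) yield post-measurement states `(X^{xᵢ}⊗Z^{yᵢ})|epr_d⟩`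
on those pairs. Then the post-measurement state of the remaining pair `(L₁, R_{m+1})` is
`(X^{∑xᵢ} ⊗ Z^{-∑yᵢ})|epr_d⟩`: the projected global state is a nonzero multiple of
`(X^{∑x}⊗Z^{-∑y})|epr⟩_{L₁R_{m+1}}` tensored with the measured Bell states. -/
theorem entanglement_transfer_chain (d m : ℕ) [NeZero d] (hd : 2 ≤ d)
    (x y : Fin m → ZMod d) :
    let ω : ℂ := Complex.exp (2 * Real.pi * Complex.I / d)
    let eprXZ : ZMod d → ZMod d → ZMod d → ZMod d → ℂ := fun x' y' i j =>
      if i = j + x' then ((Real.sqrt d : ℂ))⁻¹ * ω ^ (y' * j).val else 0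
    -- the initial state: each pair (Lᵢ, Rᵢ) in |epr_d⟩
    let Ψ : (Fin (m + 1) → ZMod d) → (Fin (m + 1) → ZMod d) → ℂ := fun l r =>
      ∏ i : Fin (m + 1), eprXZ 0 0 (l i) (r i)
    -- the state after projecting each pair (Rᵢ, Lᵢ₊₁) onto (X^{xᵢ}⊗Z^{yᵢ})|epr_d⟩
    let P : (Fin (m + 1) → ZMod d) → (Fin (m + 1) → ZMod d) → ℂ := fun l r =>
      (∏ i : Fin m, eprXZ (x i) (y i) (r i.castSucc) (l i.succ)) *
        ∑ ρ : Fin m → ZMod d, ∑ lam : Fin m → ZMod d,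
          (starRingEnd ℂ) (∏ i : Fin m, eprXZ (x i) (y i) (ρ i) (lam i)) *
            Ψ (fun j => Fin.cases (l 0) (fun i => lam i) j)
              (fun j => Fin.lastCases (r (Fin.last m)) (fun i => ρ i) j)
    ∃ c : ℂ, c ≠ 0 ∧ ∀ l r : Fin (m + 1) → ZMod d,
      P l r = c * eprXZ (∑ i, x i) (-∑ i, y i) (l 0) (r (Fin.last m)) *
        ∏ i : Fin m, eprXZ (x i) (y i) (r i.castSucc) (l i.succ) :=
  entanglement_transfer_chain_general d m x y
end

section
/- The maximum winning probability of classical (deterministic or shared-randomness) strategies in the Mermin GHZ game is exactly 3/4. -/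
/-!
Each output `fᵢ(b)` occurs in exactly two of the four winning conditions, so the XOR of the
four left-hand sides is `false`, while the XOR of the four target bits is `true`. Hence every
deterministic strategy loses on at least one query, and `f₁ = f₂ = id`, `f₃ = not` loses on
only one.
-/

abbrev ghzQueries : Finset (Bool × Bool × Bool) :=
  {(false, false, false), (false, true, true), (true, false, true), (true, true, false)}

abbrev GhzWins (f₁ f₂ f₃ : Bool → Bool) (q : Bool × Bool × Bool) : Prop :=
  xor (f₁ q.1) (xor (f₂ q.2.1) (f₃ q.2.2)) = decide (q ≠ (false, false, false))

theorem ghz_outputs_xor_eq_false (f₁ f₂ f₃ : Bool → Bool) :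
    (xor (f₁ false) (xor (f₂ false) (f₃ false)) ^^ xor (f₁ false) (xor (f₂ true) (f₃ true)) ^^
      xor (f₁ true) (xor (f₂ false) (f₃ true)) ^^ xor (f₁ true) (xor (f₂ true) (f₃ false)))
      = false := by
  simp only [Bool.xor_comm, Bool.xor_left_comm, Bool.xor_self, Bool.false_xor]

theorem ghz_exists_lost_query (f₁ f₂ f₃ : Bool → Bool) :
    ∃ q ∈ ghzQueries, ¬ GhzWins f₁ f₂ f₃ q := by
  by_contra! hwin
  have h₀ := hwin (false, false, false) (by simp)
  have h₁ := hwin (false, true, true) (by simp)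
  have h₂ := hwin (true, false, true) (by simp)
  have h₃ := hwin (true, true, false) (by simp)
  have hparity := ghz_outputs_xor_eq_false f₁ f₂ f₃
  rw [h₀, h₁, h₂, h₃] at hparity
  exact absurd hparity (by decide)

theorem card_filter_ghzWins_le (f₁ f₂ f₃ : Bool → Bool) :
    (ghzQueries.filter (GhzWins f₁ f₂ f₃)).card ≤ 3 :=
  Nat.le_of_lt_succ <|
    Finset.card_lt_card (Finset.filter_ssubset.2 (ghz_exists_lost_query f₁ f₂ f₃))

theorem card_filter_ghzWins_id_id_not : (ghzQueries.filter (GhzWins id id not)).card = 3 := by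
  decide

/-- The classical value of the Mermin GHZ game is exactly 3/4: over all deterministic
strategies (triples of functions `fᵢ : {0,1} → {0,1}`), the maximum probability (over the
uniform query from `{(0,0,0),(0,1,1),(1,0,1),(1,1,0)}`) that `f₁(x₁) ⊕ f₂(x₂) ⊕ f₃(x₃)`
equals the target bit (0 on query `(0,0,0)`, 1 otherwise) is 3/4, and it is achieved. -/
theorem ghz_classical_value :
    IsGreatest
      {p : ℚ | ∃ f₁ f₂ f₃ : Bool → Bool,
        p = ((({(false, false, false), (false, true, true), (true, false, true),
                (true, true, false)} : Finset (Bool × Bool × Bool)).filter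
              (fun q => xor (f₁ q.1) (xor (f₂ q.2.1) (f₃ q.2.2))
                  = decide (q ≠ (false, false, false)))).card : ℚ) / 4}
      (3 / 4) := by
  constructor
  · refine ⟨id, id, not, ?_⟩
    rw [card_filter_ghzWins_id_id_not]
    norm_num
  · rintro p ⟨f₁, f₂, f₃, rfl⟩
    gcongr
    exact_mod_cast card_filter_ghzWins_le f₁ f₂ f₃
end
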